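/- arXiv:2501.09581 — 3 statements merged into one kernel-verified Lean document; each statement's English description precedes it below -/
import Mathlib

section
/- Every face of the cone of n×n real positive semidefinite matrices is projectionally exposed: for each face F of PSD(n) there exists a linear map P on the space of symmetric matrices with P² = P and P(PSD(n)) = F. -/
/-- `F` is a face of the convex cone `K`. -/
def IsFace {M : Type*} [AddCommGroup M] [Module ℝ M] (K F : Set M) : Prop :=
  F.Nonempty ∧ Convex ℝ F ∧ (∀ x ∈ F, ∀ c : ℝ, 0 ≤ c → c • x ∈ F) ∧ F ⊆ K ∧
    ∀ x ∈ K, ∀ y ∈ K, x + y ∈ F → x ∈ F ∧ y ∈ F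

open Matrix in
private lemma psd_smul' {n : ℕ} {M : Matrix (Fin n) (Fin n) ℝ} (hM : M.PosSemidef)
    {c : ℝ} (hc : 0 ≤ c) : (c • M).PosSemidef := by
  refine ⟨?_, fun x => ?_⟩
  · have := hM.1
    unfold Matrix.IsHermitian at *
    rw [conjTranspose_smul, this]
    simp
  · exact (hM.smul hc).2 x

open Matrix in
private lemma psd_add_mulVec_zero {n : ℕ} {a b : Matrix (Fin n) (Fin n) ℝ}
    (ha : a.PosSemidef) (hb : b.PosSemidef) {x : Fin n → ℝ}
    (h : (a + b) *ᵥ x = 0) : a *ᵥ x = 0 := by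
  rw [← ha.dotProduct_mulVec_zero_iff]
  have h1 : star x ⬝ᵥ (a + b) *ᵥ x = 0 := by rw [h, dotProduct_zero]
  rw [add_mulVec, dotProduct_add] at h1
  have h2 := ha.dotProduct_mulVec_nonneg x
  have h3 := hb.dotProduct_mulVec_nonneg x
  linarith

open Matrix in
private lemma eq_zero_of_mulVec {n : ℕ} {M : Matrix (Fin n) (Fin n) ℝ}
    (h : ∀ x, M *ᵥ x = 0) : M = 0 := by
  ext i j
  have := congrFun (h (Pi.single j 1)) i
  simpa [mulVec_single] using this

open Matrix

/-- Every face of the cone of `n×n` real positive semidefinite matrices is projectionally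
exposed: for each face `F` of `PSD(n)` there exists a linear map `P` with `P² = P` and
`P(PSD(n)) = F`. -/
theorem stmt4 (n : ℕ) (F : Set (Matrix (Fin n) (Fin n) ℝ))
    (hF : IsFace {x : Matrix (Fin n) (Fin n) ℝ | x.PosSemidef} F) :
    ∃ P : Matrix (Fin n) (Fin n) ℝ →ₗ[ℝ] Matrix (Fin n) (Fin n) ℝ,
      P ∘ₗ P = P ∧ P '' {x : Matrix (Fin n) (Fin n) ℝ | x.PosSemidef} = F := by
  classical
  obtain ⟨hne, hconv, hcone, hsub, hface⟩ := hF
  -- basic closure properties of F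
  have h0F : (0 : Matrix (Fin n) (Fin n) ℝ) ∈ F := by
    obtain ⟨x, hx⟩ := hne
    simpa using hcone x hx 0 le_rfl
  have haddF : ∀ x ∈ F, ∀ y ∈ F, x + y ∈ F := by
    intro x hx y hy
    have hmid : (1/2 : ℝ) • x + (1/2 : ℝ) • y ∈ F :=
      hconv hx hy (by norm_num) (by norm_num) (by norm_num)
    have := hcone _ hmid 2 (by norm_num)
    simpa [smul_add, smul_smul] using this
  -- a finite subset of F spanning span F
  obtain ⟨s, hsF, hspan, hli⟩ := exists_linearIndependent ℝ F
  have hsfin : s.Finite := hli.setFinite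
  set T : Finset (Matrix (Fin n) (Fin n) ℝ) := hsfin.toFinset with hT
  have hTF : ∀ y ∈ T, y ∈ F := by
    intro y hy
    exact hsF (by simpa [hT] using hy)
  set a : Matrix (Fin n) (Fin n) ℝ := ∑ y ∈ T, y with ha
  have haF : a ∈ F := by
    rw [ha]
    exact Finset.sum_induction _ (· ∈ F) (fun x y hx hy => haddF x hx y hy) h0F hTF
  have hFpsd : ∀ b ∈ F, b.PosSemidef := fun b hb => hsub hb
  have hA : a.PosSemidef := hFpsd a haF
  -- common kernel: a *ᵥ x = 0 → b *ᵥ x = 0 for b ∈ F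
  have hkerT : ∀ t ∈ T, ∀ x, a *ᵥ x = 0 → t *ᵥ x = 0 := by
      intro t ht x hx
      have hat : a = t + (a - t) := by abel
      have hrest : (a - t).PosSemidef := by
        have : a - t = ∑ y ∈ T.erase t, y := by
          rw [ha, ← Finset.add_sum_erase _ _ ht]; abel
        rw [this]
        exact Finset.sum_induction _ Matrix.PosSemidef
          (fun x y hx hy => hx.add hy) Matrix.PosSemidef.zero
          (fun y hy => hFpsd y (hTF y (Finset.mem_of_mem_erase hy)))
      exact psd_add_mulVec_zero (hFpsd t (hTF t ht)) hrest (hat ▸ hx)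
  have hker0 : ∀ b ∈ Submodule.span ℝ s, ∀ x, a *ᵥ x = 0 → b *ᵥ x = 0 := by
    intro b hb
    induction hb using Submodule.span_induction with
    | mem y hy => exact fun x hx => hkerT y (by simpa [hT] using hy) x hx
    | zero => simp
    | add y z _ _ hy hz =>
        intro x hx
        rw [Matrix.add_mulVec, hy x hx, hz x hx]; simp
    | smul c y _ hy =>
        intro x hx
        rw [Matrix.smul_mulVec, hy x hx]; simp
  have hker : ∀ b ∈ F, ∀ x, a *ᵥ x = 0 → b *ᵥ x = 0 := fun b hb =>
    hker0 b (by rw [hspan]; exact Submodule.subset_span hb)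
  -- spectral data of a
  set u : Matrix (Fin n) (Fin n) ℝ := (hA.1.eigenvectorUnitary : Matrix (Fin n) (Fin n) ℝ)
    with hu
  set μ : Fin n → ℝ := hA.1.eigenvalues with hμ
  have hspec : a = u * Matrix.diagonal μ * star u := by
    have := hA.1.spectral_theorem
    simpa [hu, hμ, RCLike.ofReal_real_eq_id] using this
  have hμ0 : ∀ i, 0 ≤ μ i := fun i => hA.eigenvalues_nonneg i
  have huu : u * star u = 1 := Matrix.mem_unitaryGroup_iff.mp hA.1.eigenvectorUnitary.2
  have huu' : star u * u = 1 := Matrix.mem_unitaryGroup_iff'.mp hA.1.eigenvectorUnitary.2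
  set e : Fin n → ℝ := fun i => if 0 < μ i then 1 else 0 with he
  set v : Matrix (Fin n) (Fin n) ℝ := u * Matrix.diagonal e * star u with hv
  have hvherm : v.IsHermitian := by
    unfold Matrix.IsHermitian
    rw [hv]
    simp [Matrix.star_eq_conjTranspose, Matrix.conjTranspose_mul,
      Matrix.diagonal_conjTranspose, mul_assoc]
  have hvv : v * v = v := by
    rw [hv]
    rw [show u * Matrix.diagonal e * star u * (u * Matrix.diagonal e * star u)
        = u * (Matrix.diagonal e * (star u * u) * Matrix.diagonal e) * star u by
      simp only [mul_assoc]]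
    rw [huu', mul_one, Matrix.diagonal_mul_diagonal]
    have hee : (fun i => e i * e i) = e := by
      funext i; by_cases h : 0 < μ i <;> simp [he, h]
    rw [hee]
  have hav : a * v = a := by
    rw [hspec, hv]
    rw [show u * Matrix.diagonal μ * star u * (u * Matrix.diagonal e * star u)
        = u * (Matrix.diagonal μ * (star u * u) * Matrix.diagonal e) * star u by
      simp only [mul_assoc]]
    rw [huu', mul_one, Matrix.diagonal_mul_diagonal]
    have hde : (fun i => μ i * e i) = μ := by
      funext i
      by_cases h : 0 < μ i
      · simp [he, h]
      · have h0 : μ i = 0 := le_antisymm (not_lt.mp h) (hμ0 i)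
        simp [he, h, h0]
    rw [hde]
  -- b * v = b and v * b = b for b ∈ F
  have hbv : ∀ b ∈ F, b * v = b := by
    intro b hb
    have h1 : ∀ x, (b * (v - 1)) *ᵥ x = 0 := by
      intro x
      have hax : a *ᵥ ((v - 1) *ᵥ x) = 0 := by
        rw [Matrix.mulVec_mulVec]
        have : a * (v - 1) = 0 := by rw [mul_sub, hav, mul_one, sub_self]
        rw [this, Matrix.zero_mulVec]
      have := hker b hb _ hax
      rwa [Matrix.mulVec_mulVec] at this
    have := eq_zero_of_mulVec h1
    have h2 : b * v - b = 0 := by rw [← this]; rw [mul_sub, mul_one]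
    linear_combination (norm := (rw [← sub_eq_zero]; abel_nf)) h2 - this + this
  have hvb : ∀ b ∈ F, v * b = b := by
    intro b hb
    have hbherm := (hFpsd b hb).1
    have := congrArg Matrix.conjTranspose (hbv b hb)
    rwa [Matrix.conjTranspose_mul, hvherm.eq, hbherm.eq] at this
  -- key: any PSD x with v * x * v = x lies in F
  have hKey : ∀ x : Matrix (Fin n) (Fin n) ℝ, x.PosSemidef → v * x * v = x → x ∈ F := by
    intro x hx hxv
    -- C • 1 - x is PSD for C = sum of eigenvalues of x
    set ν : Fin n → ℝ := hx.1.eigenvalues with hν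
    set C : ℝ := ∑ i, ν i with hC
    have hν0 : ∀ i, 0 ≤ ν i := fun i => hx.eigenvalues_nonneg i
    have hC0 : 0 ≤ C := Finset.sum_nonneg fun i _ => hν0 i
    set u₂ : Matrix (Fin n) (Fin n) ℝ := (hx.1.eigenvectorUnitary : Matrix (Fin n) (Fin n) ℝ)
      with hu₂
    have hspec₂ : x = u₂ * Matrix.diagonal ν * u₂ᴴ := by
      have := hx.1.spectral_theorem
      simpa [hu₂, hν, RCLike.ofReal_real_eq_id, Matrix.star_eq_conjTranspose] using this
    have huu₂ : u₂ * u₂ᴴ = 1 := Matrix.mem_unitaryGroup_iff.mp hx.1.eigenvectorUnitary.2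
    have hC1x : (C • (1 : Matrix (Fin n) (Fin n) ℝ) - x).PosSemidef := by
      have hdiag : (Matrix.diagonal (fun i => C - ν i)).PosSemidef := by
        rw [Matrix.posSemidef_diagonal_iff]
        intro i
        have : ν i ≤ C := Finset.single_le_sum (fun j _ => hν0 j) (Finset.mem_univ i)
        linarith
      have := hdiag.mul_mul_conjTranspose_same u₂
      have heq : u₂ * Matrix.diagonal (fun i => C - ν i) * u₂ᴴ
          = C • (1 : Matrix (Fin n) (Fin n) ℝ) - x := by
        have hd : Matrix.diagonal (fun i => C - ν i)
            = C • (1 : Matrix (Fin n) (Fin n) ℝ) - Matrix.diagonal ν := by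
          ext i j
          by_cases h : i = j <;> simp [Matrix.diagonal, Matrix.one_apply, h]
        rw [hd, mul_sub, sub_mul, Matrix.mul_smul, mul_one, Matrix.smul_mul, huu₂, ← hspec₂]
      rwa [heq] at this
    -- C • v - x is PSD
    have hCvx : (C • v - x).PosSemidef := by
      have := hC1x.mul_mul_conjTranspose_same v
      have heq : v * (C • (1 : Matrix (Fin n) (Fin n) ℝ) - x) * vᴴ = C • v - x := by
        rw [hvherm.eq, mul_sub, sub_mul, Matrix.mul_smul, mul_one, Matrix.smul_mul, hvv, hxv]
      rwa [heq] at this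
    -- case split on whether a has positive eigenvalues
    by_cases hS : (Finset.univ.filter (fun i => 0 < μ i)).Nonempty
    · set S : Finset ℝ := (Finset.univ.filter (fun i => 0 < μ i)).image μ with hSdef
      have hSne : S.Nonempty := hS.image μ
      set ε : ℝ := S.min' hSne with hε
      have hεle : ∀ i, 0 < μ i → ε ≤ μ i := fun i h =>
        S.min'_le (μ i) (Finset.mem_image_of_mem μ
          (Finset.mem_filter.mpr ⟨Finset.mem_univ i, h⟩))
      have hεpos : 0 < ε := by
        have hmem : ε ∈ (Finset.univ.filter (fun i => 0 < μ i)).image μ := S.min'_mem hSne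
        obtain ⟨i, hi, hμi⟩ := Finset.mem_image.mp hmem
        rw [Finset.mem_filter] at hi
        rw [← hμi]; exact hi.2
      have haεv : (a - ε • v).PosSemidef := by
        have hdiag : (Matrix.diagonal (fun i => μ i - ε * e i)).PosSemidef := by
          rw [Matrix.posSemidef_diagonal_iff]
          intro i
          by_cases h : 0 < μ i
          · have hle : ε ≤ μ i := hεle i h
            simp only [he, if_pos h, mul_one]; linarith
          · simp only [he, if_neg h, mul_zero, sub_zero]; exact hμ0 i
        have := hdiag.mul_mul_conjTranspose_same u
        have hustar : uᴴ = star u := rfl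
        have heq : u * Matrix.diagonal (fun i => μ i - ε * e i) * uᴴ = a - ε • v := by
          have hd : Matrix.diagonal (fun i => μ i - ε * e i)
              = Matrix.diagonal μ - ε • Matrix.diagonal e := by
            ext i j
            by_cases h : i = j <;> simp [Matrix.diagonal, h]
          rw [hustar, hd, mul_sub, sub_mul, ← hspec, Matrix.mul_smul, Matrix.smul_mul, hv]
        rwa [heq] at this
      set c : ℝ := C / ε with hc
      have hc0 : 0 ≤ c := div_nonneg hC0 hεpos.le
      have hcε : c * ε = C := div_mul_cancel₀ C hεpos.ne'
      have hcax : (c • a - x).PosSemidef := by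
        have heq : c • a - x = c • (a - ε • v) + (C • v - x) := by
          rw [smul_sub, smul_smul, hcε]; abel
        rw [heq]
        exact (psd_smul' haεv hc0).add hCvx
      have hsum : x + (c • a - x) = c • a := by abel
      have hcaF : c • a ∈ F := hcone a haF c hc0
      exact (hface x hx (c • a - x) hcax (by rw [hsum]; exact hcaF)).1
    · -- all eigenvalues of a are zero, so v = 0 and x = 0
      have hnot : ∀ i, ¬ 0 < μ i := by
        intro i h
        exact hS ⟨i, Finset.mem_filter.mpr ⟨Finset.mem_univ i, h⟩⟩
      have hd0 : Matrix.diagonal e = 0 := by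
        ext i j
        by_cases h : i = j
        · subst h
          rw [Matrix.diagonal_apply_eq]
          show (if 0 < μ i then (1:ℝ) else 0) = 0
          rw [if_neg (hnot i)]
        · rw [Matrix.diagonal_apply_ne _ h]; rfl
      have hv0 : v = 0 := by
        rw [hv, hd0, Matrix.mul_zero, Matrix.zero_mul]
      have : x = 0 := by rw [← hxv, hv0]; simp
      rw [this]; exact h0F
  -- the projection P x = v * x * v
  refine ⟨(LinearMap.mulLeft ℝ v).comp (LinearMap.mulRight ℝ v), ?_, ?_⟩
  · apply LinearMap.ext
    intro x
    simp only [LinearMap.comp_apply, LinearMap.mulLeft_apply, LinearMap.mulRight_apply]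
    rw [show v * (v * (x * v) * v) = (v * v) * x * (v * v) by noncomm_ring]
    rw [hvv]
    noncomm_ring
  · ext y
    simp only [Set.mem_image, Set.mem_setOf_eq, LinearMap.comp_apply,
      LinearMap.mulLeft_apply, LinearMap.mulRight_apply]
    constructor
    · rintro ⟨x, hx, rfl⟩
      apply hKey
      · have := hx.mul_mul_conjTranspose_same v
        rw [hvherm.eq] at this
        rwa [show v * x * v = v * (x * v) by noncomm_ring] at this
      · rw [show v * (v * (x * v)) * v = (v * v) * x * (v * v) by noncomm_ring, hvv]
        noncomm_ring
    · intro hy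
      refine ⟨y, hFpsd y hy, ?_⟩
      rw [← mul_assoc, hvb y hy, hbv y hy]
end

section
/- Every face of PSD(n) is of the form q^T · {block-diag(a, 0) : a ∈ PSD(r)} · q for some orthogonal matrix q and some 0 ≤ r ≤ n; more precisely, for each face F there exist an orthogonal matrix q and r ≤ n such that qFq^T = { [[a,0],[0,0]] : a ∈ PSD(r) }. -/
open Matrix

section aux
lemma sum_castLE {r n : ℕ} (hrn : r ≤ n) (g : Fin n → ℝ)
    (hg : ∀ i : Fin n, ¬ (i : ℕ) < r → g i = 0) :
    ∑ i, g i = ∑ p : Fin r, g (Fin.castLE hrn p) := by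
  rw [← Finset.sum_image (g := Fin.castLE hrn) (f := g)
    (fun x _ y _ h => Fin.castLE_injective hrn h)]
  symm
  apply Finset.sum_subset (Finset.subset_univ _)
  intro i _ hi
  refine hg i fun h => hi ?_
  exact Finset.mem_image.mpr ⟨⟨(i : ℕ), h⟩, Finset.mem_univ _, rfl⟩

lemma dom_lemma {r n : ℕ} (hrn : r ≤ n) (e : Fin n → ℝ) (he : ∀ i, 0 ≤ e i)
    (hepos : ∀ p : Fin r, 0 < e (Fin.castLE hrn p)) (a : Matrix (Fin r) (Fin r) ℝ) :
    ∃ c : ℝ, 0 ≤ c ∧ ∀ v : Fin n → ℝ,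
      ∑ p, ∑ q, a p q * v (Fin.castLE hrn p) * v (Fin.castLE hrn q) ≤
        c * ∑ i, e i * v i ^ 2 := by
  set C : ℝ := ∑ p, ∑ q, |a p q| with hC
  have hC0 : 0 ≤ C := Finset.sum_nonneg fun p _ => Finset.sum_nonneg fun q _ => abs_nonneg _
  refine ⟨∑ p : Fin r, (C + 1) / e (Fin.castLE hrn p), ?_, ?_⟩
  · exact Finset.sum_nonneg fun p _ => div_nonneg (by linarith) (he _)
  intro v
  set c : ℝ := ∑ p : Fin r, (C + 1) / e (Fin.castLE hrn p) with hc
  set S : ℝ := ∑ p : Fin r, v (Fin.castLE hrn p) ^ 2 with hS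
  have hS0 : 0 ≤ S := Finset.sum_nonneg fun p _ => sq_nonneg _
  have h1 : ∑ p, ∑ q, a p q * v (Fin.castLE hrn p) * v (Fin.castLE hrn q) ≤ C * S := by
    calc ∑ p, ∑ q, a p q * v (Fin.castLE hrn p) * v (Fin.castLE hrn q)
        ≤ ∑ p, ∑ q, |a p q| * S := by
          apply Finset.sum_le_sum; intro p _
          apply Finset.sum_le_sum; intro q _
          have h2 : a p q * v (Fin.castLE hrn p) * v (Fin.castLE hrn q) ≤
              |a p q| * ((v (Fin.castLE hrn p)) ^ 2 + (v (Fin.castLE hrn q)) ^ 2) / 2 := by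
            nlinarith [abs_nonneg (a p q), le_abs_self (a p q * v (Fin.castLE hrn p) * v (Fin.castLE hrn q)),
              abs_mul (a p q * v (Fin.castLE hrn p)) (v (Fin.castLE hrn q)),
              abs_mul (a p q) (v (Fin.castLE hrn p)),
              sq_abs (v (Fin.castLE hrn p)), sq_abs (v (Fin.castLE hrn q)),
              sq_nonneg (|v (Fin.castLE hrn p)| - |v (Fin.castLE hrn q)|),
              abs_nonneg (v (Fin.castLE hrn p)), abs_nonneg (v (Fin.castLE hrn q))]
          have h3 : (v (Fin.castLE hrn p)) ^ 2 ≤ S := by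
            exact Finset.single_le_sum (f := fun p => v (Fin.castLE hrn p) ^ 2)
              (fun i _ => sq_nonneg _) (Finset.mem_univ p)
          have h4 : (v (Fin.castLE hrn q)) ^ 2 ≤ S := Finset.single_le_sum
              (f := fun p => v (Fin.castLE hrn p) ^ 2) (fun i _ => sq_nonneg _) (Finset.mem_univ q)
          nlinarith [abs_nonneg (a p q)]
        _ = C * S := by rw [hC, Finset.sum_mul]; congr 1; ext p; rw [Finset.sum_mul]
  have h5 : (C + 1) * S ≤ c * ∑ p : Fin r, e (Fin.castLE hrn p) * v (Fin.castLE hrn p) ^ 2 := by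
    rw [Finset.mul_sum, Finset.mul_sum]
    apply Finset.sum_le_sum
    intro p _
    have hep := hepos p
    have hcp : (C + 1) / e (Fin.castLE hrn p) ≤ c := by
      rw [hc]
      exact Finset.single_le_sum (f := fun p => (C+1) / e (Fin.castLE hrn p))
        (fun i _ => div_nonneg (by linarith) (he _)) (Finset.mem_univ p)
    have : (C + 1) * v (Fin.castLE hrn p) ^ 2 =
        ((C + 1) / e (Fin.castLE hrn p)) * (e (Fin.castLE hrn p) * v (Fin.castLE hrn p) ^ 2) := by
      field_simp
    rw [this]
    apply mul_le_mul_of_nonneg_right hcp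
    positivity
  have h6 : ∑ p : Fin r, e (Fin.castLE hrn p) * v (Fin.castLE hrn p) ^ 2 ≤ ∑ i, e i * v i ^ 2 := by
    rw [← Finset.sum_image (g := Fin.castLE hrn) (f := fun i => e i * v i ^ 2)
      (fun x _ y _ h => Fin.castLE_injective hrn h)]
    apply Finset.sum_le_sum_of_subset_of_nonneg (Finset.subset_univ _)
    intro i _ _
    exact mul_nonneg (he _) (sq_nonneg _)
  have hc0 : 0 ≤ c := Finset.sum_nonneg fun p _ => div_nonneg (by linarith) (he _)
  calc ∑ p, ∑ q, a p q * v (Fin.castLE hrn p) * v (Fin.castLE hrn q) ≤ C * S := h1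
    _ ≤ (C + 1) * S := by nlinarith
    _ ≤ c * ∑ p : Fin r, e (Fin.castLE hrn p) * v (Fin.castLE hrn p) ^ 2 := h5
    _ ≤ c * ∑ i, e i * v i ^ 2 := mul_le_mul_of_nonneg_left h6 hc0

end aux

/-- For each face `F` of `PSD(n)` there exist an orthogonal matrix `q` and `r ≤ n` such
that `qFqᵀ = { [[a,0],[0,0]] : a ∈ PSD(r) }`. -/
theorem stmt5 (n : ℕ) (F : Set (Matrix (Fin n) (Fin n) ℝ))
    (hF : IsFace {x : Matrix (Fin n) (Fin n) ℝ | x.PosSemidef} F) :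
    ∃ (q : Matrix (Fin n) (Fin n) ℝ) (r : ℕ), q * qᵀ = 1 ∧ r ≤ n ∧
      (fun x => q * x * qᵀ) '' F =
        {m : Matrix (Fin n) (Fin n) ℝ | ∃ a : Matrix (Fin r) (Fin r) ℝ, a.PosSemidef ∧
          m = Matrix.of fun i j : Fin n =>
            if h : (i : ℕ) < r ∧ (j : ℕ) < r then a ⟨(i : ℕ), h.1⟩ ⟨(j : ℕ), h.2⟩ else 0} := by
  obtain ⟨hne, hconv, hcone, hsub, hface⟩ := hF
  have hadd : ∀ x ∈ F, ∀ y ∈ F, x + y ∈ F := by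
    intro x hx y hy
    have h1 := hconv hx hy (by norm_num : (0:ℝ) ≤ 1/2) (by norm_num : (0:ℝ) ≤ 1/2) (by norm_num)
    have h2 := hcone _ h1 2 (by norm_num)
    convert h2 using 1
    module
  -- choose x₀ of minimal kernel
  obtain ⟨x₀, hx₀F, hx₀min⟩ : ∃ x₀ ∈ F, ∀ y ∈ F,
      Module.finrank ℝ (LinearMap.ker x₀.mulVecLin) ≤
        Module.finrank ℝ (LinearMap.ker y.mulVecLin) := by
    have hSne : ((fun x : Matrix (Fin n) (Fin n) ℝ =>
        Module.finrank ℝ (LinearMap.ker x.mulVecLin)) '' F).Nonempty := hne.image _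
    obtain ⟨x₀, hx₀F, hx₀⟩ := Nat.sInf_mem hSne
    refine ⟨x₀, hx₀F, fun y hy => ?_⟩
    have hmem : Module.finrank ℝ (LinearMap.ker y.mulVecLin) ∈
        ((fun x : Matrix (Fin n) (Fin n) ℝ =>
          Module.finrank ℝ (LinearMap.ker x.mulVecLin)) '' F) := ⟨y, hy, rfl⟩
    have := Nat.sInf_le hmem
    simpa [← hx₀] using this
  have hx₀psd : x₀.PosSemidef := hsub hx₀F
  -- kernel of x₀ is contained in kernel of every member
  have hker : ∀ y ∈ F, ∀ v, x₀ *ᵥ v = 0 → y *ᵥ v = 0 := by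
    intro y hyF v hv
    have hypsd : y.PosSemidef := hsub hyF
    have hzF : x₀ + y ∈ F := hadd _ hx₀F _ hyF
    have hle : LinearMap.ker (x₀ + y).mulVecLin ≤ LinearMap.ker x₀.mulVecLin := by
      intro w hw
      simp only [LinearMap.mem_ker, mulVecLin_apply] at hw ⊢
      have h1 : w ⬝ᵥ x₀ *ᵥ w + w ⬝ᵥ y *ᵥ w = 0 := by
        have h0 := congrArg (fun u => w ⬝ᵥ u) hw
        simpa [add_mulVec] using h0
      have h2 : (0:ℝ) ≤ w ⬝ᵥ x₀ *ᵥ w := by simpa using hx₀psd.dotProduct_mulVec_nonneg w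
      have h3 : (0:ℝ) ≤ w ⬝ᵥ y *ᵥ w := by simpa using hypsd.dotProduct_mulVec_nonneg w
      have h4 : w ⬝ᵥ x₀ *ᵥ w = 0 := by linarith
      exact (hx₀psd.dotProduct_mulVec_zero_iff w).mp (by simpa using h4)
    have heq : LinearMap.ker (x₀ + y).mulVecLin = LinearMap.ker x₀.mulVecLin :=
      Submodule.eq_of_le_of_finrank_le hle (hx₀min _ hzF)
    have hv' : v ∈ LinearMap.ker (x₀ + y).mulVecLin := by
      rw [heq]
      simpa [LinearMap.mem_ker, mulVecLin_apply] using hv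
    simp only [LinearMap.mem_ker, mulVecLin_apply, add_mulVec] at hv'
    rwa [hv, zero_add] at hv'
  -- diagonalize x₀
  have hH : x₀.IsHermitian := hx₀psd.1
  set U : Matrix (Fin n) (Fin n) ℝ := (hH.eigenvectorUnitary : Matrix (Fin n) (Fin n) ℝ) with hU
  set d : Fin n → ℝ := hH.eigenvalues with hd
  have hd0 : ∀ i, 0 ≤ d i := hx₀psd.eigenvalues_nonneg
  have hspec : star U * x₀ * U = diagonal d := by
    have h0 := hH.conjStarAlgAut_star_eigenvectorUnitary
    simpa [Unitary.conjStarAlgAut_apply] using h0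
  set σ : Equiv.Perm (Fin n) := Tuple.sort (fun i => -d i) with hσ
  set e : Fin n → ℝ := fun i => d (σ i) with he
  have he0 : ∀ i, 0 ≤ e i := fun i => hd0 _
  set r : ℕ := (Finset.univ.filter (fun i => d i ≠ 0)).card with hr
  have hrn : r ≤ n := le_trans (Finset.card_filter_le _ _) (by simp)
  have her : ∀ i : Fin n, e i ≠ 0 ↔ (i : ℕ) < r := by
    have hmono : Antitone e := by
      intro i j hij
      have := Tuple.monotone_sort (fun i => -d i) hij
      simpa [he] using this
    have hcard : (Finset.univ.filter (fun i => e i ≠ 0)).card = r := by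
      rw [hr]
      apply Finset.card_equiv σ
      intro i
      simp [he]
    intro i
    constructor
    · intro hei
      by_contra hlt
      push_neg at hlt
      have hsub2 : Finset.Iic i ⊆ Finset.univ.filter (fun j => e j ≠ 0) := by
        intro j hj
        simp only [Finset.mem_Iic] at hj
        simp only [Finset.mem_filter, Finset.mem_univ, true_and]
        have h1 : e i ≤ e j := hmono hj
        have h2 : 0 < e i := lt_of_le_of_ne (he0 _) (Ne.symm hei)
        exact ne_of_gt (lt_of_lt_of_le h2 h1)
      have := Finset.card_le_card hsub2
      rw [hcard, Fin.card_Iic] at this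
      omega
    · intro hlt hei
      have hsub2 : Finset.univ.filter (fun j => e j ≠ 0) ⊆ Finset.Iio i := by
        intro j hj
        simp only [Finset.mem_filter, Finset.mem_univ, true_and] at hj
        simp only [Finset.mem_Iio]
        by_contra hji
        push_neg at hji
        have h1 : e j ≤ e i := hmono hji
        have h2 : e j ≤ 0 := hei ▸ h1
        exact hj (le_antisymm h2 (he0 _))
      have := Finset.card_le_card hsub2
      rw [hcard, Fin.card_Iio] at this
      omega
  -- the orthogonal matrix
  set q : Matrix (Fin n) (Fin n) ℝ := (star U).submatrix σ id with hq'
  have hstarU : (star U)ᵀ = U := by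
    rw [Matrix.star_eq_conjTranspose, conjTranspose_eq_transpose_of_trivial, transpose_transpose]
  have hUunit : star U * U = 1 := by
    have := hH.eigenvectorUnitary.2
    rw [Matrix.mem_unitaryGroup_iff'] at this
    exact this
  have hqT : qᵀ = Uᵀᵀ.submatrix id σ := by
    rw [hq', transpose_submatrix, Matrix.star_eq_conjTranspose,
      conjTranspose_eq_transpose_of_trivial]
  have hconj : ∀ x : Matrix (Fin n) (Fin n) ℝ, q * x * qᵀ = (star U * x * U).submatrix σ σ := by
    intro x
    rw [hq', hqT, transpose_transpose]
    have h1 : (star U).submatrix (⇑σ) id * x = ((star U) * x).submatrix (⇑σ) id := by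
      have := submatrix_mul_equiv (star U) x (⇑σ) (Equiv.refl (Fin n)) id
      simpa using this
    rw [h1]
    have h2 : ((star U) * x).submatrix (⇑σ) id * U.submatrix id (⇑σ) =
        ((star U) * x * U).submatrix (⇑σ) (⇑σ) := by
      have := submatrix_mul_equiv ((star U) * x) U (⇑σ) (Equiv.refl (Fin n)) (⇑σ)
      simpa using this
    rw [h2]
  have hq1 : q * qᵀ = 1 := by
    calc q * qᵀ = q * 1 * qᵀ := by rw [Matrix.mul_one]
      _ = (star U * 1 * U).submatrix ⇑σ ⇑σ := hconj 1
      _ = 1 := by rw [Matrix.mul_one, hUunit, submatrix_one_equiv]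
  have hqtq : qᵀ * q = 1 := mul_eq_one_comm.mp hq1
  have hdiagq : q * x₀ * qᵀ = diagonal e := by
    rw [hconj x₀, hspec]
    rw [submatrix_diagonal _ _ (Equiv.injective σ)]
    rfl
  have hx₀eq : x₀ = qᵀ * diagonal e * q := by
    rw [← hdiagq]
    simp only [Matrix.mul_assoc, hqtq, Matrix.mul_one]
    rw [← Matrix.mul_assoc, hqtq, Matrix.one_mul]
  refine ⟨q, r, hq1, hrn, ?_⟩
  apply Set.eq_of_subset_of_subset
  · rintro w ⟨y, hyF, rfl⟩
    simp only [Set.mem_setOf_eq]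
    set z : Matrix (Fin n) (Fin n) ℝ := q * y * qᵀ with hz
    have hzpsd : z.PosSemidef := by
      have h0 := (hsub hyF).mul_mul_conjTranspose_same q
      rwa [conjTranspose_eq_transpose_of_trivial] at h0
    have hcol : ∀ j : Fin n, ¬ (j : ℕ) < r → ∀ i, z i j = 0 := by
      intro j hjr i
      have hej : e j = 0 := by
        by_contra hne'
        exact hjr ((her j).mp hne')
      have hx₀qT : x₀ * qᵀ = qᵀ * diagonal e := by
        rw [hx₀eq, Matrix.mul_assoc, hq1, Matrix.mul_one]
      have hx₀v : x₀ *ᵥ (qᵀ *ᵥ Pi.single j 1) = 0 := by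
        rw [mulVec_mulVec, hx₀qT, ← mulVec_mulVec, diagonal_mulVec_single, hej]
        simp
      have hyv : y *ᵥ (qᵀ *ᵥ Pi.single j 1) = 0 := hker y hyF _ hx₀v
      have hzv : z *ᵥ Pi.single j 1 = 0 := by
        rw [hz, ← mulVec_mulVec, ← mulVec_mulVec, hyv, mulVec_zero]
      have h5 := congrFun hzv i
      simpa [mulVec_single] using h5
    have hsym : ∀ i j, z i j = z j i := by
      intro i j
      have h6 := hzpsd.1.apply i j
      rw [star_trivial] at h6
      exact h6.symm
    refine ⟨z.submatrix (Fin.castLE hrn) (Fin.castLE hrn), hzpsd.submatrix _, ?_⟩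
    ext i j
    rw [of_apply]
    by_cases h : (i : ℕ) < r ∧ (j : ℕ) < r
    · rw [dif_pos h]
      rfl
    · rw [dif_neg h]
      push_neg at h
      by_cases hi : (i : ℕ) < r
      · exact hcol j (not_lt.mpr (h hi)) i
      · rw [hsym]
        exact hcol i hi j
  · rintro w ⟨a, hapsd, rfl⟩
    set m : Matrix (Fin n) (Fin n) ℝ := Matrix.of fun i j : Fin n =>
      if h : (i : ℕ) < r ∧ (j : ℕ) < r then a ⟨(i : ℕ), h.1⟩ ⟨(j : ℕ), h.2⟩ else 0 with hm
    have hquad : ∀ v : Fin n → ℝ, v ⬝ᵥ m *ᵥ v =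
        ∑ p, ∑ s, a p s * v (Fin.castLE hrn p) * v (Fin.castLE hrn s) := by
      intro v
      have h1 : v ⬝ᵥ m *ᵥ v = ∑ i, v i * ∑ j, m i j * v j := by
        simp only [dotProduct, mulVec]
      rw [h1]
      have houter : ∀ i : Fin n, ¬ (i : ℕ) < r → (v i * ∑ j, m i j * v j) = 0 := by
        intro i hi
        have h7 : ∀ j, m i j = 0 := by
          intro j
          rw [hm, of_apply, dif_neg (fun hc => hi hc.1)]
        simp [h7]
      rw [sum_castLE hrn _ houter]
      apply Finset.sum_congr rfl
      intro p _
      have hinner : ∀ j : Fin n, ¬ (j : ℕ) < r → m (Fin.castLE hrn p) j * v j = 0 := by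
        intro j hj
        rw [hm, of_apply, dif_neg (fun hc => hj hc.2), zero_mul]
      rw [sum_castLE hrn _ hinner, Finset.mul_sum]
      apply Finset.sum_congr rfl
      intro s _
      have h8 : m (Fin.castLE hrn p) (Fin.castLE hrn s) = a p s := by
        rw [hm, of_apply, dif_pos ⟨p.isLt, s.isLt⟩]
        exact rfl
      rw [h8]
      ring
    have hmsym : ∀ i j, m i j = m j i := by
      intro i j
      by_cases h : (i : ℕ) < r ∧ (j : ℕ) < r
      · rw [hm, of_apply, of_apply, dif_pos h, dif_pos ⟨h.2, h.1⟩]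
        have h9 := hapsd.1.apply (⟨(i : ℕ), h.1⟩ : Fin r) (⟨(j : ℕ), h.2⟩ : Fin r)
        rw [star_trivial] at h9
        exact h9.symm
      · rw [hm, of_apply, of_apply, dif_neg h, dif_neg (fun hc => h ⟨hc.2, hc.1⟩)]
    have hmherm : m.IsHermitian := by
      ext i j
      rw [conjTranspose_apply, star_trivial]
      exact hmsym j i
    have hmpsd : m.PosSemidef := by
      refine PosSemidef.of_dotProduct_mulVec_nonneg hmherm fun v => ?_
      rw [show star v = v from star_trivial v, hquad v]
      have h10 := hapsd.dotProduct_mulVec_nonneg (fun p => v (Fin.castLE hrn p))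
      rw [show star (fun p => v (Fin.castLE hrn p)) = (fun p => v (Fin.castLE hrn p))
        from star_trivial _] at h10
      have h11 : (fun p => v (Fin.castLE hrn p)) ⬝ᵥ a *ᵥ (fun p => v (Fin.castLE hrn p)) =
          ∑ p, ∑ s, a p s * v (Fin.castLE hrn p) * v (Fin.castLE hrn s) := by
        simp only [dotProduct, mulVec]
        apply Finset.sum_congr rfl
        intro p _
        rw [Finset.mul_sum]
        apply Finset.sum_congr rfl
        intro s _
        ring
      rwa [h11] at h10
    have hepos : ∀ p : Fin r, 0 < e (Fin.castLE hrn p) := by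
      intro p
      exact lt_of_le_of_ne (he0 _) (Ne.symm ((her _).mpr p.isLt))
    obtain ⟨c, hc0, hcle⟩ := dom_lemma hrn e he0 hepos a
    have hwpsd : (c • diagonal e - m).PosSemidef := by
      apply PosSemidef.of_dotProduct_mulVec_nonneg
      · apply Matrix.IsHermitian.sub _ hmherm
        have : c • diagonal e = diagonal (c • e) := by
          rw [diagonal_smul]
        rw [this]
        exact isHermitian_diagonal _
      · intro v
        rw [show star v = v from star_trivial v]
        have hcalc : v ⬝ᵥ (c • diagonal e - m) *ᵥ v =
            c * (∑ i, e i * v i ^ 2) - v ⬝ᵥ m *ᵥ v := by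
          rw [sub_mulVec, dotProduct_sub]
          congr 1
          rw [smul_mulVec, dotProduct_smul, smul_eq_mul]
          congr 1
          simp only [dotProduct, mulVec_diagonal]
          apply Finset.sum_congr rfl
          intro i _
          ring
        rw [hcalc, hquad v]
        have := hcle v
        linarith
    have psd1 : (qᵀ * m * q).PosSemidef := by
      have h0 := hmpsd.conjTranspose_mul_mul_same q
      rwa [conjTranspose_eq_transpose_of_trivial] at h0
    have psd2 : (qᵀ * (c • diagonal e - m) * q).PosSemidef := by
      have h0 := hwpsd.conjTranspose_mul_mul_same q
      rwa [conjTranspose_eq_transpose_of_trivial] at h0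
    have hsum : qᵀ * m * q + qᵀ * (c • diagonal e - m) * q = c • x₀ := by
      rw [← Matrix.add_mul, ← Matrix.mul_add]
      have h12 : m + (c • diagonal e - m) = c • diagonal e := by abel
      rw [h12, hx₀eq, mul_smul_comm, smul_mul_assoc]
    have hxyF : qᵀ * m * q + qᵀ * (c • diagonal e - m) * q ∈ F := by
      rw [hsum]
      exact hcone x₀ hx₀F c hc0
    obtain ⟨hmemF, -⟩ := hface _ psd1 _ psd2 hxyF
    refine ⟨qᵀ * m * q, hmemF, ?_⟩
    show q * (qᵀ * m * q) * qᵀ = m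
    rw [← Matrix.mul_assoc, ← Matrix.mul_assoc, hq1, Matrix.one_mul,
      Matrix.mul_assoc, hq1, Matrix.mul_one]
end

section
/- Let A be a T-algebra of rank r, x ∈ cl C(A), and x = tt* with t ∈ T₊ proper. Then x generates an extreme ray of cl C(A) if and only if ρ_i(t_{ii}) > 0 for exactly one index i ∈ {1,…,r}. -/
/-- A T-algebra of rank `r` in the sense of Vinberg: a bigraded algebra
`A = ⊕_{i,j} A_{ij}` with involution `conj`, satisfying axioms (a1)–(a7).
`c a i j` denotes the `(i,j)` component of `a`, `e i` the unit of `A_{ii} ≅ ℝ`, and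
`ρ i a` the real coordinate of the `(i,i)` component of `a`; the trace is
`tr a = ∑ i, ρ i a` and the inner product is `⟨a,b⟩ = tr (a b*)`. -/
structure TAlgebra (A : Type*) [AddCommGroup A] [Module ℝ A] (r : ℕ) where
  mul : A →ₗ[ℝ] A →ₗ[ℝ] A
  conj : A →ₗ[ℝ] A
  S : Fin r → Fin r → Submodule ℝ A
  c : A → Fin r → Fin r → A
  e : Fin r → A
  ρ : Fin r → A → ℝ
  -- the bigradation
  c_mem : ∀ a i j, c a i j ∈ S i j
  c_sum : ∀ a, (∑ i, ∑ j, c a i j) = a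
  c_unique : ∀ (a : A) (f : Fin r → Fin r → A), (∀ i j, f i j ∈ S i j) →
    (∑ i, ∑ j, f i j) = a → ∀ i j, c a i j = f i j
  grade_mul : ∀ i j k : Fin r, ∀ x ∈ S i j, ∀ y ∈ S j k, mul x y ∈ S i k
  grade_mul_zero : ∀ i j k l : Fin r, j ≠ k → ∀ x ∈ S i j, ∀ y ∈ S k l, mul x y = 0
  -- the involution
  conj_conj : ∀ a, conj (conj a) = a
  conj_mul : ∀ a b, conj (mul a b) = mul (conj b) (conj a)
  conj_grade : ∀ i j : Fin r, ∀ x ∈ S i j, conj x ∈ S j i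
  -- (a1): each `A_{ii}` is a subalgebra isomorphic to `ℝ`, with unit `e i`
  e_mem : ∀ i, e i ∈ S i i
  conj_e : ∀ i, conj (e i) = e i
  e_ne : ∀ i, e i ≠ 0
  diag_coord : ∀ a i, c a i i = ρ i a • e i
  ρ_e : ∀ i, ρ i (e i) = 1
  e_idem : ∀ i, mul (e i) (e i) = e i
  -- (a2)
  e_mul : ∀ a (i j : Fin r), mul (e i) (c a i j) = c a i j
  mul_e : ∀ a (i j : Fin r), mul (c a j i) (e i) = c a j i
  -- (a3)
  tr_comm : ∀ a b, (∑ i, ρ i (mul a b)) = ∑ i, ρ i (mul b a)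
  -- (a4)
  tr_assoc : ∀ a b d, (∑ i, ρ i (mul (mul a b) d)) = ∑ i, ρ i (mul a (mul b d))
  -- (a5)
  tr_nonneg : ∀ a, 0 ≤ ∑ i, ρ i (mul a (conj a))
  tr_pos : ∀ a, (∑ i, ρ i (mul a (conj a))) = 0 → a = 0
  -- (a6)
  assoc6 : ∀ i j k l : Fin r, i ≤ j → j ≤ k → k ≤ l →
    ∀ x ∈ S i j, ∀ y ∈ S j k, ∀ z ∈ S k l, mul x (mul y z) = mul (mul x y) z
  -- (a7)
  assoc7 : ∀ i j k l : Fin r, i ≤ j → j ≤ k → l ≤ k →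
    ∀ x ∈ S i j, ∀ y ∈ S j k, ∀ z ∈ S l k,
      mul x (mul y (conj z)) = mul (mul x y) (conj z)

namespace TAlgebra

variable {A : Type*} [AddCommGroup A] [Module ℝ A] {r : ℕ} (T : TAlgebra A r)

/-- `t` is upper triangular: all components `t_{ij}` with `j < i` vanish. -/
def UpperTriangular (t : A) : Prop := ∀ i j : Fin r, j < i → T.c t i j = 0

/-- The set `T₊` of upper triangular elements with nonnegative diagonal. -/
def Tplus : Set A := {t | T.UpperTriangular t ∧ ∀ i, 0 ≤ T.ρ i t}

/-- The closed homogeneous cone `cl C(A) = {tt* : t ∈ T₊}`. -/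
def clCone : Set A := {x | ∃ t ∈ T.Tplus, x = T.mul t (T.conj t)}

/-- `t ∈ T₊` is proper if `ρ_i(t_{ii}) = 0` implies that the `i`-th column of `t`
vanishes. -/
def Proper (t : A) : Prop :=
  t ∈ T.Tplus ∧ ∀ i : Fin r, T.ρ i t = 0 → ∀ k : Fin r, T.c t k i = 0

/-- The trace of the T-algebra. -/
def tr (a : A) : ℝ := ∑ i, T.ρ i a

/-- The inner product `⟨a,b⟩ = tr (a b*)` of the T-algebra. -/
def inner' (a b : A) : ℝ := T.tr (T.mul a (T.conj b))

end TAlgebra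

namespace TAlgebra

variable {A : Type*} [AddCommGroup A] [Module ℝ A] {r : ℕ} (T : TAlgebra A r)

lemma c_zero (i j : Fin r) : T.c 0 i j = 0 := by
  have := T.c_unique 0 (fun _ _ => 0) (fun _ _ => Submodule.zero_mem _) (by simp) i j
  simpa using this

lemma c_add (a b : A) (i j : Fin r) : T.c (a + b) i j = T.c a i j + T.c b i j := by
  refine (T.c_unique (a+b) (fun i j => T.c a i j + T.c b i j)
    (fun i j => Submodule.add_mem _ (T.c_mem a i j) (T.c_mem b i j)) ?_ i j)
  simp only [Finset.sum_add_distrib]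
  rw [T.c_sum a, T.c_sum b]

lemma c_smul (x : ℝ) (a : A) (i j : Fin r) : T.c (x • a) i j = x • T.c a i j := by
  refine (T.c_unique (x • a) (fun i j => x • T.c a i j)
    (fun i j => Submodule.smul_mem _ _ (T.c_mem a i j)) ?_ i j)
  simp only [← Finset.smul_sum]
  rw [T.c_sum a]

lemma c_sub (a b : A) (i j : Fin r) : T.c (a - b) i j = T.c a i j - T.c b i j := by
  have h1 : a - b + b = a := by abel
  have := T.c_add (a - b) b i j
  rw [h1] at this
  rw [this]; abel

lemma smul_e_inj {x y : ℝ} (i : Fin r) (h : x • T.e i = y • T.e i) : x = y := by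
  by_contra hne
  have h2 : (x - y) • T.e i = 0 := by rw [sub_smul, h, sub_self]
  rcases smul_eq_zero.mp h2 with h3 | h3
  · exact hne (by linarith [sub_eq_zero.mp (by exact_mod_cast h3)])
  · exact T.e_ne i h3

lemma ρ_zero (i : Fin r) : T.ρ i (0 : A) = 0 := by
  have h := T.diag_coord (0 : A) i
  rw [T.c_zero] at h
  exact (T.smul_e_inj i (by rw [← h, zero_smul])).symm

lemma ρ_add (a b : A) (i : Fin r) : T.ρ i (a + b) = T.ρ i a + T.ρ i b := by
  have h := T.diag_coord (a + b) i
  rw [T.c_add, T.diag_coord, T.diag_coord, ← add_smul] at h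
  exact (T.smul_e_inj i h).symm

lemma ρ_smul (x : ℝ) (a : A) (i : Fin r) : T.ρ i (x • a) = x * T.ρ i a := by
  have h := T.diag_coord (x • a) i
  rw [T.c_smul, T.diag_coord, smul_smul] at h
  exact (T.smul_e_inj i h).symm

lemma ρ_sub (a b : A) (i : Fin r) : T.ρ i (a - b) = T.ρ i a - T.ρ i b := by
  have h1 : a - b + b = a := by abel
  have := T.ρ_add (a - b) b i
  rw [h1] at this; linarith

lemma tr_zero : T.tr (0 : A) = 0 := by simp [TAlgebra.tr, T.ρ_zero]

lemma tr_add (a b : A) : T.tr (a + b) = T.tr a + T.tr b := by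
  simp [TAlgebra.tr, T.ρ_add, Finset.sum_add_distrib]

lemma tr_smul (x : ℝ) (a : A) : T.tr (x • a) = x * T.tr a := by
  simp [TAlgebra.tr, T.ρ_smul, Finset.mul_sum]

lemma tr_sub (a b : A) : T.tr (a - b) = T.tr a - T.tr b := by
  have h1 : a - b + b = a := by abel
  have := T.tr_add (a - b) b
  rw [h1] at this; linarith

end TAlgebra
namespace TAlgebra

variable {A : Type*} [AddCommGroup A] [Module ℝ A] {r : ℕ} (T : TAlgebra A r)

lemma c_of_mem {a : A} {i j : Fin r} (h : a ∈ T.S i j) (p q : Fin r) :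
    T.c a p q = if p = i ∧ q = j then a else 0 := by
  refine T.c_unique a (fun p q => if p = i ∧ q = j then a else 0) ?_ ?_ p q
  · intro p q
    by_cases hp : p = i ∧ q = j
    · rw [if_pos hp, hp.1, hp.2]; exact h
    · rw [if_neg hp]; exact Submodule.zero_mem _
  · rw [Finset.sum_eq_single i]
    · rw [Finset.sum_eq_single j] <;> simp +contextual
    · intro b _ hb
      apply Finset.sum_eq_zero
      intro q _
      simp [hb]
    · simp

lemma c_self_of_mem {a : A} {i j : Fin r} (h : a ∈ T.S i j) : T.c a i j = a := by
  rw [T.c_of_mem h, if_pos ⟨rfl, rfl⟩]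

lemma ρ_of_mem_offdiag {a : A} {i j : Fin r} (h : a ∈ T.S i j) {m : Fin r}
    (hm : ¬(m = i ∧ m = j)) : T.ρ m a = 0 := by
  have h1 := T.diag_coord a m
  rw [T.c_of_mem h, if_neg hm] at h1
  exact (T.smul_e_inj m (by rw [← h1, zero_smul])).symm

lemma tr_of_mem_diag {a : A} {j : Fin r} (h : a ∈ T.S j j) : T.tr a = T.ρ j a := by
  rw [TAlgebra.tr, Finset.sum_eq_single j]
  · intro m _ hm
    exact T.ρ_of_mem_offdiag h (by simp [hm])
  · simp

lemma eq_smul_e_of_mem_diag {a : A} {j : Fin r} (h : a ∈ T.S j j) : a = T.ρ j a • T.e j := by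
  conv_lhs => rw [← T.c_self_of_mem h, T.diag_coord]

lemma c_conj (a : A) (p q : Fin r) : T.c (T.conj a) p q = T.conj (T.c a q p) := by
  refine T.c_unique (T.conj a) (fun p q => T.conj (T.c a q p))
    (fun p q => T.conj_grade _ _ _ (T.c_mem a q p)) ?_ p q
  rw [Finset.sum_comm]
  simp only [← map_sum]
  rw [T.c_sum a]

lemma ρ_conj (a : A) (m : Fin r) : T.ρ m (T.conj a) = T.ρ m a := by
  have h := T.diag_coord (T.conj a) m
  rw [T.c_conj, T.diag_coord, map_smul, T.conj_e] at h
  exact (T.smul_e_inj m h).symm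

lemma tr_conj (a : A) : T.tr (T.conj a) = T.tr a := by
  simp [TAlgebra.tr, T.ρ_conj]

lemma conj_mulconj (a b : A) : T.conj (T.mul a (T.conj b)) = T.mul b (T.conj a) := by
  rw [T.conj_mul, T.conj_conj]

lemma tr_e (i : Fin r) : T.tr (T.e i) = 1 := by
  rw [T.tr_of_mem_diag (T.e_mem i), T.ρ_e]

-- trace commutativity / associativity in `tr` form
lemma tr_mul_comm (a b : A) : T.tr (T.mul a b) = T.tr (T.mul b a) := T.tr_comm a b

lemma tr_mul_assoc (a b d : A) : T.tr (T.mul (T.mul a b) d) = T.tr (T.mul a (T.mul b d)) :=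
  T.tr_assoc a b d

-- inner product lemmas
lemma inner'_nonneg (a : A) : 0 ≤ T.inner' a a := T.tr_nonneg a

lemma eq_zero_of_inner'_self {a : A} (h : T.inner' a a = 0) : a = 0 := T.tr_pos a h

lemma inner'_comm (a b : A) : T.inner' a b = T.inner' b a := by
  unfold TAlgebra.inner'
  rw [T.tr_mul_comm, ← T.tr_conj (T.mul (T.conj b) a), T.conj_mul, T.conj_conj,
    T.tr_mul_comm]

lemma inner'_add_left (a b d : A) : T.inner' (a + b) d = T.inner' a d + T.inner' b d := by
  unfold TAlgebra.inner'
  rw [← T.tr_add]; congr 1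
  rw [show T.mul (a+b) = T.mul a + T.mul b from map_add _ a b]; simp

lemma inner'_add_right (a b d : A) : T.inner' d (a + b) = T.inner' d a + T.inner' d b := by
  rw [T.inner'_comm, T.inner'_add_left, T.inner'_comm a d, T.inner'_comm b d]

lemma inner'_smul_left (x : ℝ) (a d : A) : T.inner' (x • a) d = x * T.inner' a d := by
  unfold TAlgebra.inner'
  rw [← T.tr_smul]; congr 1; rw [map_smul]; simp

lemma inner'_smul_right (x : ℝ) (a d : A) : T.inner' d (x • a) = x * T.inner' d a := by
  rw [T.inner'_comm, T.inner'_smul_left, T.inner'_comm a d]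

lemma inner'_zero_left (d : A) : T.inner' 0 d = 0 := by
  unfold TAlgebra.inner'; simp [T.tr_zero]

lemma inner'_zero_right (d : A) : T.inner' d 0 = 0 := by
  rw [T.inner'_comm, T.inner'_zero_left]

lemma inner'_sub_left (a b d : A) : T.inner' (a - b) d = T.inner' a d - T.inner' b d := by
  have h1 : a - b + b = a := by abel
  have := T.inner'_add_left (a - b) b d
  rw [h1] at this; linarith

lemma inner'_sub_right (a b d : A) : T.inner' d (a - b) = T.inner' d a - T.inner' d b := by
  rw [T.inner'_comm, T.inner'_sub_left, T.inner'_comm a d, T.inner'_comm b d]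

end TAlgebra
namespace TAlgebra

variable {A : Type*} [AddCommGroup A] [Module ℝ A] {r : ℕ} (T : TAlgebra A r)

/-- The `j`-th row `∑ₘ a_{jm}` of `a`. -/
def row (a : A) (j : Fin r) : A := ∑ m, T.c a j m

lemma mul_sum_left {ι : Type*} (s : Finset ι) (f : ι → A) (b : A) :
    T.mul (∑ i ∈ s, f i) b = ∑ i ∈ s, T.mul (f i) b := by
  rw [map_sum, LinearMap.sum_apply]

lemma mul_sum_right {ι : Type*} (a : A) (s : Finset ι) (g : ι → A) :
    T.mul a (∑ i ∈ s, g i) = ∑ i ∈ s, T.mul a (g i) := map_sum (T.mul a) _ _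

lemma sum_row (a : A) : ∑ j, T.row a j = a := T.c_sum a

/-- Expansion of `(row a j)(row b k)*` as a sum of graded products. -/
lemma row_mul_conj_row (a b : A) (j k : Fin r) :
    T.mul (T.row a j) (T.conj (T.row b k)) =
      ∑ m, T.mul (T.c a j m) (T.conj (T.c b k m)) := by
  unfold TAlgebra.row
  simp only [map_sum, LinearMap.sum_apply]
  apply Finset.sum_congr rfl
  intro m _
  rw [Finset.sum_eq_single m]
  · intro m' _ hm'
    exact T.grade_mul_zero j m' m k hm' _ (T.c_mem a j m')
      _ (T.conj_grade _ _ _ (T.c_mem b k m))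
  · simp

lemma row_mul_conj_row_mem (a b : A) (j k : Fin r) :
    T.mul (T.row a j) (T.conj (T.row b k)) ∈ T.S j k := by
  rw [T.row_mul_conj_row]
  exact Submodule.sum_mem _ (fun m _ => T.grade_mul j m k _ (T.c_mem a j m) _
    (T.conj_grade _ _ _ (T.c_mem b k m)))

/-- Component formula: `(ab*)_{jk} = (row a j)(row b k)*`. -/
lemma c_mul_conj (a b : A) (j k : Fin r) :
    T.c (T.mul a (T.conj b)) j k = T.mul (T.row a j) (T.conj (T.row b k)) := by
  refine T.c_unique _ (fun j k => T.mul (T.row a j) (T.conj (T.row b k)))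
    (fun j k => T.row_mul_conj_row_mem a b j k) ?_ j k
  rw [show (∑ j, ∑ k, T.mul (T.row a j) (T.conj (T.row b k)))
      = T.mul (∑ j, T.row a j) (T.conj (∑ k, T.row b k)) by
    simp only [map_sum, LinearMap.sum_apply]
    exact Finset.sum_comm]
  rw [T.sum_row, T.sum_row]

/-- `ρ_j (a a*) = ⟪row a j, row a j⟫`. -/
lemma ρ_mul_conj_self (a : A) (j : Fin r) :
    T.ρ j (T.mul a (T.conj a)) = T.inner' (T.row a j) (T.row a j) := by
  have h1 : T.ρ j (T.mul a (T.conj a)) • T.e j = T.mul (T.row a j) (T.conj (T.row a j)) := by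
    rw [← T.diag_coord, T.c_mul_conj]
  have h2 := congrArg T.tr h1
  rw [T.tr_smul, T.tr_e, mul_one] at h2
  rw [h2, TAlgebra.inner']

lemma ρ_mul_conj_self_nonneg (a : A) (j : Fin r) : 0 ≤ T.ρ j (T.mul a (T.conj a)) := by
  rw [T.ρ_mul_conj_self]; exact T.inner'_nonneg _

lemma row_eq_zero_of_ρ (a : A) (j : Fin r) (h : T.ρ j (T.mul a (T.conj a)) = 0) :
    T.row a j = 0 := by
  rw [T.ρ_mul_conj_self] at h
  exact T.eq_zero_of_inner'_self h

/-- Self-adjointness of `a a*`. -/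
lemma conj_mul_conj_self (a : A) : T.conj (T.mul a (T.conj a)) = T.mul a (T.conj a) :=
  T.conj_mulconj a a

/-- conj-version of axiom (a7): `(w q*) p* = w (q* p*)`. -/
lemma assoc7' (i j k l : Fin r) (hij : i ≤ j) (hjk : j ≤ k) (hlk : l ≤ k)
    (p : A) (hp : p ∈ T.S i j) (q : A) (hq : q ∈ T.S j k) (w : A) (hw : w ∈ T.S l k) :
    T.mul (T.mul w (T.conj q)) (T.conj p) = T.mul w (T.mul (T.conj q) (T.conj p)) := by
  have h := T.assoc7 i j k l hij hjk hlk p hp q hq w hw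
  have h2 := congrArg T.conj h
  simp only [T.conj_mul, T.conj_conj] at h2
  exact h2

end TAlgebra
namespace TAlgebra

variable {A : Type*} [AddCommGroup A] [Module ℝ A] {r : ℕ} (T : TAlgebra A r)

/-- Key derived associativity for rows of an upper triangular element:
`R_k (R_q* p*) = (R_k R_q*) p*` for `p ∈ S j q`, `j ≤ q`. -/
lemma rowM (s : A) (hs : T.UpperTriangular s) (k q j : Fin r) (hjq : j ≤ q)
    (p : A) (hp : p ∈ T.S j q) :
    T.mul (T.row s k) (T.mul (T.conj (T.row s q)) (T.conj p)) =
      T.mul (T.mul (T.row s k) (T.conj (T.row s q))) (T.conj p) := by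
  have hL : T.mul (T.row s k) (T.mul (T.conj (T.row s q)) (T.conj p)) =
      ∑ m, T.mul (T.c s k m) (T.mul (T.conj (T.c s q m)) (T.conj p)) := by
    unfold TAlgebra.row
    simp only [map_sum, LinearMap.sum_apply]
    apply Finset.sum_congr rfl
    intro m _
    rw [Finset.sum_eq_single m]
    · intro m' _ hm'
      exact T.grade_mul_zero k m' m j hm' _ (T.c_mem s k m') _
        (T.grade_mul m q j _ (T.conj_grade _ _ _ (T.c_mem s q m)) _
          (T.conj_grade _ _ _ hp))
    · simp
  have hR : T.mul (T.mul (T.row s k) (T.conj (T.row s q))) (T.conj p) =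
      ∑ m, T.mul (T.mul (T.c s k m) (T.conj (T.c s q m))) (T.conj p) := by
    rw [T.row_mul_conj_row, T.mul_sum_left]
  rw [hL, hR]
  apply Finset.sum_congr rfl
  intro m _
  by_cases hkm : (m : Fin r) < k
  · rw [hs k m hkm]
    simp
  by_cases hqm : (m : Fin r) < q
  · rw [hs q m hqm]
    simp
  · push_neg at hkm hqm
    exact (T.assoc7' j q m k hjq hqm hkm p hp _ (T.c_mem s q m) _ (T.c_mem s k m)).symm

lemma inner'_row_mul (s : A) (g : A) (j k : Fin r) :
    T.inner' (T.row s j) (T.mul g (T.row s k)) =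
      T.inner' (T.c (T.mul s (T.conj s)) j k) g := by
  unfold TAlgebra.inner'
  rw [T.conj_mul, ← T.tr_mul_assoc, T.c_mul_conj]

lemma inner'_mul_mul (s : A) (hs : T.UpperTriangular s) (g γ : A) (k q j : Fin r)
    (hjq : j ≤ q) (hγ : γ ∈ T.S j q) :
    T.inner' (T.mul g (T.row s k)) (T.mul γ (T.row s q)) =
      T.tr (T.mul g (T.mul (T.c (T.mul s (T.conj s)) k q) (T.conj γ))) := by
  unfold TAlgebra.inner'
  rw [T.conj_mul, T.tr_mul_assoc, T.rowM s hs k q j hjq γ hγ, ← T.c_mul_conj]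

lemma inner'_mul_self (s : A) (hs : T.UpperTriangular s) (g : A) (j k : Fin r)
    (hjk : j ≤ k) (hg : g ∈ T.S j k) :
    T.inner' (T.mul g (T.row s k)) (T.mul g (T.row s k)) =
      T.ρ k (T.mul s (T.conj s)) * T.inner' g g := by
  rw [T.inner'_mul_mul s hs g g k k j hjk hg, T.diag_coord]
  have h1 : T.mul (T.ρ k (T.mul s (T.conj s)) • T.e k) (T.conj g) =
      T.ρ k (T.mul s (T.conj s)) • T.mul (T.e k) (T.conj g) := by
    rw [map_smul, LinearMap.smul_apply]
  have h2 : T.mul (T.e k) (T.conj g) = T.conj g := by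
    conv_lhs => rw [← T.c_self_of_mem (T.conj_grade _ _ _ hg)]
    rw [T.e_mul]
    rw [T.c_self_of_mem (T.conj_grade _ _ _ hg)]
  rw [h1, h2, map_smul, T.tr_smul]
  rfl

lemma inner'_expand (x y z : A) :
    T.inner' (x - y - z) (x - y - z) =
      T.inner' x x + T.inner' y y + T.inner' z z - 2 * T.inner' x y - 2 * T.inner' x z
        + 2 * T.inner' y z := by
  simp only [T.inner'_sub_left, T.inner'_sub_right]
  rw [T.inner'_comm y x, T.inner'_comm z x, T.inner'_comm z y]
  ring

/-- The master inequality: positivity of the Gram form of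
`row_j s - g • row_k s - γ • row_i s`. -/
lemma master (s : A) (hs : T.UpperTriangular s) (j k i : Fin r) (hjk : j ≤ k) (hji : j ≤ i)
    (g : A) (hg : g ∈ T.S j k) (γ : A) (hγ : γ ∈ T.S j i) :
    0 ≤ T.ρ j (T.mul s (T.conj s)) + T.inner' g g * T.ρ k (T.mul s (T.conj s))
        + T.inner' γ γ * T.ρ i (T.mul s (T.conj s))
        - 2 * T.inner' (T.c (T.mul s (T.conj s)) j k) g
        - 2 * T.inner' (T.c (T.mul s (T.conj s)) j i) γ
        + 2 * T.tr (T.mul g (T.mul (T.c (T.mul s (T.conj s)) k i) (T.conj γ))) := by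
  have h0 := T.inner'_nonneg (T.row s j - T.mul g (T.row s k) - T.mul γ (T.row s i))
  rw [T.inner'_expand] at h0
  rw [← T.ρ_mul_conj_self s j,
    T.inner'_mul_self s hs g j k hjk hg,
    T.inner'_mul_self s hs γ j i hji hγ,
    T.inner'_row_mul s g j k, T.inner'_row_mul s γ j i,
    T.inner'_mul_mul s hs g γ k i j hji hγ] at h0
  linarith

/-- Kill the linear term: if `0 ≤ C⟪h,h⟫ + 2⟪B,h⟫` for all `h` in a submodule
containing `B`, then `B = 0`. -/
lemma quad_kill (V : Submodule ℝ A) (C : ℝ) (hC : 0 ≤ C) (B : A) (hB : B ∈ V)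
    (H : ∀ h ∈ V, 0 ≤ C * T.inner' h h + 2 * T.inner' B h) : B = 0 := by
  set β : ℝ := (C + 1)⁻¹ with hβ
  have hβpos : 0 < β := by positivity
  have h1 := H ((-β) • B) (Submodule.smul_mem _ _ hB)
  rw [T.inner'_smul_left, T.inner'_smul_right] at h1
  have hBB : 0 ≤ T.inner' B B := T.inner'_nonneg B
  have hCβ : C * β < 2 := by
    have h2 : C / (C + 1) ≤ 1 := (div_le_one (by linarith)).mpr (by linarith)
    rw [div_eq_mul_inv] at h2
    rw [hβ]; linarith
  have hkey : T.inner' B B = 0 := by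
    rcases eq_or_lt_of_le hBB with h | hpos
    · exact h.symm
    · exfalso
      nlinarith [mul_pos hβpos hpos]
  exact T.eq_zero_of_inner'_self hkey

end TAlgebra
namespace TAlgebra

variable {A : Type*} [AddCommGroup A] [Module ℝ A] {r : ℕ} (T : TAlgebra A r)

lemma tr_sum {ι : Type*} (s : Finset ι) (f : ι → A) :
    T.tr (∑ i ∈ s, f i) = ∑ i ∈ s, T.tr (f i) := by
  classical
  induction s using Finset.induction with
  | empty => simp [T.tr_zero]
  | @insert a s h ih => rw [Finset.sum_insert h, Finset.sum_insert h, T.tr_add, ih]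

lemma inner'_sum_left {ι : Type*} (s : Finset ι) (f : ι → A) (b : A) :
    T.inner' (∑ i ∈ s, f i) b = ∑ i ∈ s, T.inner' (f i) b := by
  unfold TAlgebra.inner'
  rw [T.mul_sum_left, T.tr_sum]

lemma inner'_sum_right {ι : Type*} (s : Finset ι) (f : ι → A) (b : A) :
    T.inner' b (∑ i ∈ s, f i) = ∑ i ∈ s, T.inner' b (f i) := by
  rw [T.inner'_comm, T.inner'_sum_left]
  exact Finset.sum_congr rfl (fun i _ => T.inner'_comm _ _)

lemma inner'_grade_orth (a b : A) (j k m m' : Fin r) (h : m ≠ m') :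
    T.inner' (T.c a j m) (T.c b k m') = 0 := by
  unfold TAlgebra.inner'
  rw [T.grade_mul_zero j m m' k h _ (T.c_mem a j m) _ (T.conj_grade _ _ _ (T.c_mem b k m')),
    T.tr_zero]

lemma inner'_e (i : Fin r) : T.inner' (T.e i) (T.e i) = 1 := by
  unfold TAlgebra.inner'
  rw [T.conj_e, T.e_idem, T.tr_e]

lemma inner'_row_self (a : A) (j : Fin r) :
    T.inner' (T.row a j) (T.row a j) = ∑ m, T.inner' (T.c a j m) (T.c a j m) := by
  unfold TAlgebra.row
  rw [T.inner'_sum_left]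
  apply Finset.sum_congr rfl
  intro m _
  rw [T.inner'_sum_right, Finset.sum_eq_single m]
  · intro m' _ hm'
    rw [T.inner'_comm]
    exact T.inner'_grade_orth a a j j m' m hm'
  · simp

/-- The `i`-th column of `a`. -/
def colpart (a : A) (i : Fin r) : A := ∑ k, T.c a k i

lemma c_colpart (a : A) (i p q : Fin r) :
    T.c (T.colpart a i) p q = if q = i then T.c a p i else 0 := by
  refine T.c_unique _ (fun p q => if q = i then T.c a p i else 0) ?_ ?_ p q
  · intro p q
    by_cases h : q = i
    · rw [if_pos h, h]; exact T.c_mem a p i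
    · rw [if_neg h]; exact Submodule.zero_mem _
  · unfold TAlgebra.colpart
    apply Finset.sum_congr rfl
    intro p _
    simp

lemma ρ_colpart (a : A) (i p : Fin r) :
    T.ρ p (T.colpart a i) = if p = i then T.ρ i a else 0 := by
  have h1 : T.ρ p (T.colpart a i) • T.e p = (if p = i then T.ρ i a else 0) • T.e p := by
    rw [← T.diag_coord, T.c_colpart]
    by_cases h : p = i
    · subst h; rw [if_pos rfl, if_pos rfl, T.diag_coord]
    · rw [if_neg h, if_neg h, zero_smul]
  exact T.smul_e_inj p h1

lemma colpart_mem_Tplus {a : A} (ha : a ∈ T.Tplus) (i : Fin r) : T.colpart a i ∈ T.Tplus := by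
  constructor
  · intro p q hpq
    rw [T.c_colpart]
    by_cases h : q = i
    · rw [if_pos h]; exact h ▸ (ha.1 p q hpq)
    · rw [if_neg h]
  · intro p
    rw [T.ρ_colpart]
    by_cases h : p = i
    · rw [if_pos h]; exact ha.2 i
    · rw [if_neg h]

lemma sub_colpart_mem_Tplus {a : A} (ha : a ∈ T.Tplus) (i : Fin r) :
    a - T.colpart a i ∈ T.Tplus := by
  constructor
  · intro p q hpq
    rw [T.c_sub, T.c_colpart, ha.1 p q hpq]
    by_cases h : q = i
    · rw [if_pos h]; simp [h ▸ (ha.1 p q hpq)]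
    · rw [if_neg h]; simp
  · intro p
    rw [T.ρ_sub, T.ρ_colpart]
    by_cases h : p = i
    · subst h; simp
    · rw [if_neg h]; simpa using ha.2 p

/-- If `a` is concentrated in column `i` and `b` has vanishing column `i`, then `ab* = 0`. -/
lemma mul_conj_eq_zero_of_cols {a b : A} {i : Fin r}
    (hacol : ∀ p q, q ≠ i → T.c a p q = 0) (hbcol : ∀ p, T.c b p i = 0) :
    T.mul a (T.conj b) = 0 := by
  rw [← T.c_sum (T.mul a (T.conj b))]
  apply Finset.sum_eq_zero
  intro j _
  apply Finset.sum_eq_zero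
  intro k _
  rw [T.c_mul_conj, T.row_mul_conj_row]
  apply Finset.sum_eq_zero
  intro m _
  by_cases h : m = i
  · rw [h, hbcol k]
    simp
  · rw [hacol j m h]
    simp

end TAlgebra
namespace TAlgebra

variable {A : Type*} [AddCommGroup A] [Module ℝ A] {r : ℕ} (T : TAlgebra A r)

lemma inner'_diag_sq (a : A) (j : Fin r) :
    T.inner' (T.c a j j) (T.c a j j) = T.ρ j a ^ 2 := by
  rw [T.diag_coord, T.inner'_smul_left, T.inner'_smul_right, T.inner'_e]
  ring

lemma ρ_sq_le_ρ_mul_conj (a : A) (j : Fin r) :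
    T.ρ j a ^ 2 ≤ T.ρ j (T.mul a (T.conj a)) := by
  rw [T.ρ_mul_conj_self, T.inner'_row_self, ← T.inner'_diag_sq a j]
  exact Finset.single_le_sum (f := fun m => T.inner' (T.c a j m) (T.c a j m))
    (fun m _ => T.inner'_nonneg _) (Finset.mem_univ j)

lemma forward_dir (t x : A) (ht : T.Proper t) (hx : x = T.mul t (T.conj t))
    (hx0 : x ≠ 0) (hface : IsFace T.clCone {y | ∃ c : ℝ, 0 ≤ c ∧ y = c • x}) :
    ∃! i : Fin r, 0 < T.ρ i t := by
  -- existence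
  have hex : ∃ i, 0 < T.ρ i t := by
    by_contra h
    push_neg at h
    have hzero : ∀ i, T.ρ i t = 0 := fun i => le_antisymm (h i) (ht.1.2 i)
    have ht0 : t = 0 := by
      rw [← T.c_sum t]
      apply Finset.sum_eq_zero
      intro j _
      apply Finset.sum_eq_zero
      intro k _
      exact ht.2 k (hzero k) j
    apply hx0
    rw [hx, ht0]
    simp
  -- no two distinct positive diagonal entries
  have key : ∀ i j : Fin r, i < j → 0 < T.ρ i t → 0 < T.ρ j t → False := by
    intro i j hij hi hj
    set T1 := T.colpart t i with hT1
    set T2 := t - T.colpart t i with hT2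
    set y1 := T.mul T1 (T.conj T1) with hy1
    set y2 := T.mul T2 (T.conj T2) with hy2
    have hy1K : y1 ∈ T.clCone := ⟨T1, T.colpart_mem_Tplus ht.1 i, rfl⟩
    have hy2K : y2 ∈ T.clCone := ⟨T2, T.sub_colpart_mem_Tplus ht.1 i, rfl⟩
    have hcross1 : T.mul T1 (T.conj T2) = 0 := by
      apply T.mul_conj_eq_zero_of_cols (i := i)
      · intro p q hq
        rw [T.c_colpart, if_neg hq]
      · intro p
        rw [T.c_sub, T.c_colpart, if_pos rfl, sub_self]
    have hcross2 : T.mul T2 (T.conj T1) = 0 := by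
      have := congrArg T.conj hcross1
      rw [T.conj_mulconj] at this
      rw [this]
      simp
    have hsum : y1 + y2 = x := by
      have ht12 : t = T1 + T2 := by rw [hT1, hT2]; abel
      rw [hx, ht12, hy1, hy2]
      simp only [map_add, LinearMap.add_apply]
      rw [hcross1, hcross2]
      abel
    have hxF : x ∈ {y | ∃ c : ℝ, 0 ≤ c ∧ y = c • x} := ⟨1, by norm_num, (one_smul ℝ x).symm⟩
    obtain ⟨c₁, hc₁, hy1F⟩ := (hface.2.2.2.2 y1 hy1K y2 hy2K (by rw [hsum]; exact hxF)).1
    -- compute ρ_j y1 = 0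
    have hρjy1 : T.ρ j y1 = 0 := by
      rw [hy1, T.ρ_mul_conj_self, T.inner'_row_self]
      apply Finset.sum_eq_zero
      intro m _
      by_cases hm : m = i
      · rw [hm, T.c_colpart, if_pos rfl, ht.1.1 j i hij]
        exact T.inner'_zero_left _
      · rw [T.c_colpart, if_neg hm]
        exact T.inner'_zero_left _
    -- ρ_i y1 > 0
    have hρiy1 : 0 < T.ρ i y1 := by
      have h1 : T.ρ i T1 ^ 2 ≤ T.ρ i y1 := T.ρ_sq_le_ρ_mul_conj T1 i
      have h2 : T.ρ i T1 = T.ρ i t := by rw [hT1, T.ρ_colpart, if_pos rfl]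
      nlinarith
    -- ρ_j x > 0
    have hρjx : 0 < T.ρ j x := by
      have h1 : T.ρ j t ^ 2 ≤ T.ρ j x := hx ▸ T.ρ_sq_le_ρ_mul_conj t j
      nlinarith
    have h3 : T.ρ j y1 = c₁ * T.ρ j x := by rw [hy1F, T.ρ_smul]
    have h4 : T.ρ i y1 = c₁ * T.ρ i x := by rw [hy1F, T.ρ_smul]
    have hc10 : c₁ = 0 := by
      by_contra hne
      have : 0 < c₁ * T.ρ j x := mul_pos (lt_of_le_of_ne hc₁ (Ne.symm hne)) hρjx
      rw [← h3, hρjy1] at this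
      exact lt_irrefl 0 this
    rw [hc10, zero_mul] at h4
    rw [h4] at hρiy1
    exact lt_irrefl 0 hρiy1
  obtain ⟨i0, hi0⟩ := hex
  refine ⟨i0, hi0, ?_⟩
  intro j hj
  by_contra hne
  rcases lt_or_gt_of_ne hne with h | h
  · exact key j i0 h hj hi0
  · exact key i0 j h hi0 hj

end TAlgebra
namespace TAlgebra

variable {A : Type*} [AddCommGroup A] [Module ℝ A] {r : ℕ} (T : TAlgebra A r)

lemma smul_mem_Tplus {a : A} (ha : a ∈ T.Tplus) {b : ℝ} (hb : 0 ≤ b) : b • a ∈ T.Tplus := by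
  constructor
  · intro p q h
    rw [T.c_smul, ha.1 p q h, smul_zero]
  · intro p
    rw [T.ρ_smul]
    exact mul_nonneg hb (ha.2 p)

lemma mul_conj_smul (a : A) (b : ℝ) :
    T.mul (b • a) (T.conj (b • a)) = (b * b) • T.mul a (T.conj a) := by
  rw [map_smul, map_smul, LinearMap.smul_apply, map_smul, smul_smul]

set_option maxHeartbeats 1000000 in
lemma backward_dir (t x : A) (ht : T.Proper t) (hx : x = T.mul t (T.conj t))
    (i : Fin r) (hi : 0 < T.ρ i t) (huniq : ∀ j, 0 < T.ρ j t → j = i) :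
    x ≠ 0 ∧ IsFace T.clCone {y | ∃ c : ℝ, 0 ≤ c ∧ y = c • x} := by
  set α := T.ρ i t with hα
  have hαpos : 0 < α := hi
  have hαne : α ≠ 0 := ne_of_gt hαpos
  -- all columns other than `i` vanish
  have hcol : ∀ m, m ≠ i → ∀ k, T.c t k m = 0 := by
    intro m hm k
    refine ht.2 m ?_ k
    rcases lt_or_eq_of_le (ht.1.2 m) with h | h
    · exact absurd (huniq m h) hm
    · exact h.symm
  have hrowt : ∀ j, T.row t j = T.c t j i := by
    intro j
    unfold TAlgebra.row
    rw [Finset.sum_eq_single i]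
    · intro m _ hm; exact hcol m hm j
    · simp
  have hcx : ∀ j k, T.c x j k = T.mul (T.c t j i) (T.conj (T.c t k i)) := by
    intro j k
    rw [hx, T.c_mul_conj, hrowt, hrowt]
  have hρx : ∀ j, T.ρ j x = T.inner' (T.c t j i) (T.c t j i) := by
    intro j
    rw [hx, T.ρ_mul_conj_self, hrowt]
  have htii : T.c t i i = α • T.e i := T.diag_coord t i
  have hρix : T.ρ i x = α * α := by
    rw [hρx, htii, T.inner'_smul_left, T.inner'_smul_right, T.inner'_e]
    ring
  have hxne : x ≠ 0 := by
    intro h0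
    rw [h0, T.ρ_zero] at hρix
    nlinarith
  have hcxji : ∀ j, T.c x j i = α • T.c t j i := by
    intro j
    rw [hcx j i, htii, map_smul, T.conj_e, map_smul, T.mul_e]
  refine ⟨hxne, ⟨0, 0, le_refl 0, (zero_smul ℝ x).symm⟩, ?_, ?_, ?_, ?_⟩
  · -- convexity
    rintro y1 ⟨c1, hc1, rfl⟩ y2 ⟨c2, hc2, rfl⟩ a b ha hb _
    exact ⟨a * c1 + b * c2, by positivity, by rw [smul_smul, smul_smul, add_smul]⟩
  · -- closed under nonnegative scaling
    rintro y ⟨c1, hc1, rfl⟩ c hc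
    exact ⟨c * c1, mul_nonneg hc hc1, by rw [smul_smul]⟩
  · -- contained in the cone
    rintro y ⟨c1, hc1, rfl⟩
    refine ⟨Real.sqrt c1 • t, T.smul_mem_Tplus ht.1 (Real.sqrt_nonneg c1), ?_⟩
    rw [T.mul_conj_smul, Real.mul_self_sqrt hc1, hx]
  · -- the face property: the crux
    rintro u ⟨s, hsP, rfl⟩ v ⟨w, hwP, rfl⟩ ⟨cc, hcc, hsum⟩
    set U := T.mul s (T.conj s) with hU
    set V := T.mul w (T.conj w) with hV
    have hρsum : ∀ p, T.ρ p U + T.ρ p V = cc * T.ρ p x := by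
      intro p
      have h := congrArg (T.ρ p) hsum
      rwa [T.ρ_add, T.ρ_smul] at h
    have hcsum : ∀ j k, T.c U j k + T.c V j k = cc • T.c x j k := by
      intro j k
      have h := congrArg (fun z => T.c z j k) hsum
      rwa [T.c_add, T.c_smul] at h
    set au := T.ρ i U with hau
    have hauge : 0 ≤ au := T.ρ_mul_conj_self_nonneg s i
    have havge : 0 ≤ T.ρ i V := T.ρ_mul_conj_self_nonneg w i
    have hρiUV : T.ρ i U + T.ρ i V = cc * (α * α) := by rw [hρsum i, hρix]
    set μ := au * (α⁻¹ * α⁻¹) with hμ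
    have hμge : 0 ≤ μ := by positivity
    -- Stage A : row i column entries of U
    have stageA : ∀ j, j < i →
        T.c U j i = (au * α⁻¹) • T.c t j i ∧ T.ρ j U = μ * T.ρ j x := by
      intro j hj
      set γ0 : A := α⁻¹ • T.c t j i with hγ0
      have hγ0mem : γ0 ∈ T.S j i := Submodule.smul_mem _ _ (T.c_mem t j i)
      set X := T.ρ j x with hX
      have hXval : T.inner' (T.c t j i) (T.c t j i) = X := (hρx j).symm
      have hg2 : T.inner' γ0 γ0 = α⁻¹ * α⁻¹ * X := by
        rw [hγ0, T.inner'_smul_left, T.inner'_smul_right, hXval]; ring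
      have hax : T.inner' (T.c x j i) γ0 = X := by
        rw [hcxji j, hγ0, T.inner'_smul_left, T.inner'_smul_right, hXval]
        field_simp
      -- the two quadratic inequalities
      have pu : ∀ γ ∈ T.S j i, 0 ≤ T.ρ j U + T.inner' γ γ * T.ρ i U
          - 2 * T.inner' (T.c U j i) γ := by
        intro γ hγ
        have h := T.master s hsP.1 j i i hj.le hj.le 0 (Submodule.zero_mem _) γ hγ
        simp only [T.inner'_zero_left, T.inner'_zero_right, map_zero,
          LinearMap.zero_apply, T.tr_zero, zero_mul, mul_zero] at h
        rw [← hU] at h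
        linarith
      have pv : ∀ γ ∈ T.S j i, 0 ≤ T.ρ j V + T.inner' γ γ * T.ρ i V
          - 2 * T.inner' (T.c V j i) γ := by
        intro γ hγ
        have h := T.master w hwP.1 j i i hj.le hj.le 0 (Submodule.zero_mem _) γ hγ
        simp only [T.inner'_zero_left, T.inner'_zero_right, map_zero,
          LinearMap.zero_apply, T.tr_zero, zero_mul, mul_zero] at h
        rw [← hV] at h
        linarith
      have h1 := pu γ0 hγ0mem
      have h2 := pv γ0 hγ0mem
      have h3 : T.inner' (T.c U j i) γ0 + T.inner' (T.c V j i) γ0 = cc * X := by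
        rw [← T.inner'_add_left, hcsum j i, T.inner'_smul_left, hax]
      have h6 : (α⁻¹ * α⁻¹ * X) * T.ρ i U + (α⁻¹ * α⁻¹ * X) * T.ρ i V = cc * X := by
        rw [← mul_add, hρiUV]
        field_simp
      rw [hg2] at h1 h2
      have hρsj : T.ρ j U + T.ρ j V = cc * X := hρsum j
      have hPu0 : T.ρ j U + (α⁻¹ * α⁻¹ * X) * T.ρ i U
          - 2 * T.inner' (T.c U j i) γ0 = 0 := by linarith
      -- kill the linear term
      set B := au • γ0 - T.c U j i with hB
      have hBmem : B ∈ T.S j i :=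
        Submodule.sub_mem _ (Submodule.smul_mem _ _ hγ0mem) (T.c_mem U j i)
      have hB0 : B = 0 := by
        refine T.quad_kill (T.S j i) au hauge B hBmem ?_
        intro h hh
        have hq := pu (γ0 + h) (Submodule.add_mem _ hγ0mem hh)
        rw [T.inner'_add_left, T.inner'_add_right, T.inner'_add_right,
          T.inner'_add_right, T.inner'_comm h γ0] at hq
        have hBh : T.inner' B h = au * T.inner' γ0 h - T.inner' (T.c U j i) h := by
          rw [hB, T.inner'_sub_left, T.inner'_smul_left]
        have hexp : (T.inner' γ0 γ0 + T.inner' γ0 h + (T.inner' γ0 h + T.inner' h h))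
              * T.ρ i U
            = T.inner' γ0 γ0 * T.ρ i U + 2 * T.inner' γ0 h * au + T.inner' h h * au := by
          rw [hau, hU]; ring
        rw [hg2] at hq
        have hexp2 : (α⁻¹ * α⁻¹ * X + T.inner' γ0 h + (T.inner' γ0 h + T.inner' h h))
              * T.ρ i U
            = (α⁻¹ * α⁻¹ * X) * T.ρ i U + 2 * T.inner' γ0 h * au + T.inner' h h * au := by
          rw [hau, hU]; ring
        nlinarith [hq, hPu0, hBh, hexp2]
      have hcU : T.c U j i = (au * α⁻¹) • T.c t j i := by
        have : T.c U j i = au • γ0 := by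
          have := sub_eq_zero.mp hB0
          exact this.symm
        rw [this, hγ0, smul_smul]
      refine ⟨hcU, ?_⟩
      have hiU : T.inner' (T.c U j i) γ0 = (au * α⁻¹) * (α⁻¹ * X) := by
        rw [hcU, hγ0, T.inner'_smul_left, T.inner'_smul_right, hXval]
      rw [hiU] at hPu0
      rw [hμ]
      have h8 : au * (α⁻¹ * α⁻¹) * X = au * α⁻¹ * (α⁻¹ * X) := by ring
      have h7 : α⁻¹ * α⁻¹ * X * T.ρ i U = au * α⁻¹ * (α⁻¹ * X) := by rw [← hau]; ring
      linarith [hPu0, h7, h8]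
    -- Stage B : off-diagonal components strictly inside
    have hxsa : T.conj x = x := by rw [hx]; exact T.conj_mul_conj_self t
    have stageB : ∀ j k : Fin r, j < k → k < i → T.c U j k = μ • T.c x j k := by
      intro j k hjk hki
      have hji : j < i := hjk.trans hki
      obtain ⟨hcUji, hρjU⟩ := stageA j hji
      obtain ⟨hcUki, hρkU⟩ := stageA k hki
      set γ0 : A := α⁻¹ • T.c t j i with hγ0
      have hγ0mem : γ0 ∈ T.S j i := Submodule.smul_mem _ _ (T.c_mem t j i)
      set X := T.ρ j x with hX
      have hXval : T.inner' (T.c t j i) (T.c t j i) = X := (hρx j).symm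
      have hg2 : T.inner' γ0 γ0 = α⁻¹ * α⁻¹ * X := by
        rw [hγ0, T.inner'_smul_left, T.inner'_smul_right, hXval]; ring
      have hcxkj : T.c x k j = T.conj (T.c x j k) := by
        conv_lhs => rw [← hxsa]
        rw [T.c_conj]
      set B := μ • T.c x j k - T.c U j k with hB
      have hBmem : B ∈ T.S j k :=
        Submodule.sub_mem _ (Submodule.smul_mem _ _ (T.c_mem x j k)) (T.c_mem U j k)
      have hB0 : B = 0 := by
        refine T.quad_kill (T.S j k) (T.ρ k U) (by
          rw [hU]; exact T.ρ_mul_conj_self_nonneg s k) B hBmem ?_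
        intro g hg
        have hq := T.master s hsP.1 j k i hjk.le hji.le g hg γ0 hγ0mem
        rw [← hU] at hq
        have e1 : T.inner' γ0 γ0 * T.ρ i U = μ * X := by
          rw [hg2, ← hau, hμ]; ring
        have e2 : T.inner' (T.c U j i) γ0 = μ * X := by
          rw [hcUji, hγ0, T.inner'_smul_left, T.inner'_smul_right, hXval, hμ]; ring
        have e3 : T.tr (T.mul g (T.mul (T.c U k i) (T.conj γ0))) =
            μ * T.inner' (T.c x j k) g := by
          rw [hcUki, hγ0]
          simp only [map_smul, LinearMap.smul_apply, smul_smul]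
          rw [← hcx k j, T.tr_smul, hcxkj]
          have h5 : T.tr (T.mul g (T.conj (T.c x j k))) = T.inner' (T.c x j k) g := by
            rw [T.inner'_comm]; rfl
          rw [h5, hμ]; ring
        have hBg : T.inner' B g = μ * T.inner' (T.c x j k) g - T.inner' (T.c U j k) g := by
          rw [hB, T.inner'_sub_left, T.inner'_smul_left]
        linarith [hq, e1, e2, e3, hρjU, hBg]
      have := sub_eq_zero.mp hB0
      exact this.symm
    -- rows above `i` vanish
    have hkgt : ∀ k, i < k → T.row s k = 0 ∧ T.row w k = 0 ∧ T.c t k i = 0 := by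
      intro k hk
      have htk : T.c t k i = 0 := ht.1.1 k i hk
      have hρkx : T.ρ k x = 0 := by rw [hρx k, htk, T.inner'_zero_left]
      have h := hρsum k
      rw [hρkx, mul_zero] at h
      have hU0 : T.ρ k U = 0 := by
        have h1 : 0 ≤ T.ρ k U := by rw [hU]; exact T.ρ_mul_conj_self_nonneg s k
        have h2 : 0 ≤ T.ρ k V := by rw [hV]; exact T.ρ_mul_conj_self_nonneg w k
        linarith
      have hV0 : T.ρ k V = 0 := by
        have h1 : 0 ≤ T.ρ k U := by rw [hU]; exact T.ρ_mul_conj_self_nonneg s k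
        have h2 : 0 ≤ T.ρ k V := by rw [hV]; exact T.ρ_mul_conj_self_nonneg w k
        linarith
      refine ⟨T.row_eq_zero_of_ρ s k (by rw [← hU]; exact hU0),
        T.row_eq_zero_of_ρ w k (by rw [← hV]; exact hV0), htk⟩
    -- all components of `U` are `μ` times those of `x`
    have hall : ∀ j k : Fin r, T.c U j k = μ • T.c x j k := by
      have step : ∀ j k : Fin r, j ≤ k → T.c U j k = μ • T.c x j k := by
        intro j k hjk
        rcases lt_trichotomy k i with hk | hk | hk
        · rcases lt_or_eq_of_le hjk with h | h
          · exact stageB j k h hk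
          · subst h
            rw [T.diag_coord U j, T.diag_coord x j, (stageA j hk).2, smul_smul]
        · subst hk
          rcases lt_or_eq_of_le hjk with h | h
          · rw [(stageA j h).1, hcxji j, smul_smul]
            congr 1
            rw [hμ, show au * (α⁻¹ * α⁻¹) * α = au * α⁻¹ * (α⁻¹ * α) from by ring,
              inv_mul_cancel₀ hαne, mul_one]
          · subst h
            rw [T.diag_coord U j, T.diag_coord x j, smul_smul, hρix, ← hau, hμ]
            congr 1
            rw [show au * (α⁻¹ * α⁻¹) * (α * α) = au * ((α⁻¹ * α) * (α⁻¹ * α)) from by ring,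
              inv_mul_cancel₀ hαne, mul_one, mul_one]
        · have h1 := hkgt k hk
          have hcU0 : T.c U j k = 0 := by
            rw [hU, T.c_mul_conj, h1.1, map_zero, map_zero]
          have hcx0 : T.c x j k = 0 := by
            rw [hcx, h1.2.2, map_zero, map_zero]
          rw [hcU0, hcx0, smul_zero]
      intro j k
      rcases le_or_gt j k with h | h
      · exact step j k h
      · have hsaU : T.conj U = U := by rw [hU]; exact T.conj_mul_conj_self s
        have h2 : T.c U j k = T.conj (T.c U k j) := by
          conv_lhs => rw [← hsaU]
          rw [T.c_conj]
        have h3 : T.c x j k = T.conj (T.c x k j) := by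
          conv_lhs => rw [← hxsa]
          rw [T.c_conj]
        rw [h2, step k j h.le, map_smul, ← h3]
    have hUx : U = μ • x := by
      have h1 : ∑ j, ∑ k, T.c U j k = ∑ j, ∑ k, μ • T.c x j k :=
        Finset.sum_congr rfl (fun j _ => Finset.sum_congr rfl (fun k _ => hall j k))
      rw [T.c_sum U] at h1
      rw [h1]
      simp only [← Finset.smul_sum]
      rw [T.c_sum x]
    constructor
    · exact ⟨μ, hμge, hUx⟩
    · have hVx : V = (cc - μ) • x := by
        have h2 : V = cc • x - U := by rw [← hsum]; abel
        rw [h2, hUx, ← sub_smul]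
      refine ⟨cc - μ, ?_, hVx⟩
      have hau2 : au = cc * (α * α) - T.ρ i V := by
        rw [hau]; linarith [hρiUV]
      have h9 : μ = cc - T.ρ i V * (α⁻¹ * α⁻¹) := by
        rw [hμ, hau2]
        field_simp
      have h10 : 0 ≤ T.ρ i V * (α⁻¹ * α⁻¹) :=
        mul_nonneg havge (by positivity)
      linarith [h9, h10]

end TAlgebra
/-- Let `A` be a T-algebra of rank `r`, `x ∈ cl C(A)`, and `x = tt*` with `t ∈ T₊` proper.
Then `x` generates an extreme ray of `cl C(A)` if and only if `ρ_i(t_{ii}) > 0` for exactly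
one index `i`. -/
theorem stmt15 {A : Type*} [AddCommGroup A] [Module ℝ A] {r : ℕ} (T : TAlgebra A r)
    (t x : A) (ht : T.Proper t) (hx : x = T.mul t (T.conj t)) :
    (x ≠ 0 ∧ IsFace T.clCone {y | ∃ c : ℝ, 0 ≤ c ∧ y = c • x}) ↔
      (∃! i : Fin r, 0 < T.ρ i t) := by
  constructor
  · rintro ⟨hx0, hface⟩
    exact T.forward_dir t x ht hx hx0 hface
  · rintro ⟨i, hi, huniq⟩
    exact T.backward_dir t x ht hx i hi huniq
end
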